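/- Let 𝒟 be a dyadic grid on ℝⁿ, 0 ≤ α < n, f ∈ L^∞ with compact support, 𝒮 ⊆ 𝒟 a sparse family (each Q ∈ 𝒮 contains a measurable E_Q ⊆ Q with ℒ(E_Q) ≥ ½ℒ(Q), and the sets E_Q are pairwise disjoint) satisfying the pointwise bound M_α^𝒟 f(x) ≤ c Σ_{Q∈𝒮} ℓ(Q)^α (⨍_Q |f|) 1_{E_Q}(x) for all x. Then for any locally finite Borel measure μ, ∫ M_α^𝒟 f dμ ≤ 2c ∫ Mf(x) M_α μ(x) dx. -/

import Mathlib

/-!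
For `x ∈ E_Q ⊆ Q` the average `⨍_Q |f|` is one of the averages in the supremum defining `Mf(x)`,
and `ℓ(Q)^α μ(Q) / |Q|` one of those defining `M_α μ(x)`. Hence
`ℓ(Q)^α (⨍_Q |f|) μ(E_Q) ≤ ℓ(Q)^α (⨍_Q |f|) μ(Q) ≤ 2 ∫_{E_Q} Mf · M_α μ` because `|Q| ≤ 2 |E_Q|`,
and the disjointness of the sets `E_Q` lets these integrals add up to at most `2 ∫ Mf · M_α μ`.
-/

open MeasureTheory
open scoped ENNReal

/-- An axis-parallel (half-open) cube with corner `c` and side length `l`. -/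
def cubeOf (n : ℕ) (c : Fin n → ℝ) (l : ℝ) : Set (EuclideanSpace ℝ (Fin n)) :=
  {y | ∀ i, c i ≤ y i ∧ y i < c i + l}

/-- The fractional maximal function of `f` over cubes. -/
noncomputable def cubeFracMaxFn (n : ℕ) (α : ℝ) (f : EuclideanSpace ℝ (Fin n) → ℝ)
    (x : EuclideanSpace ℝ (Fin n)) : ℝ≥0∞ :=
  ⨆ (c : Fin n → ℝ) (l : ℝ) (_ : 0 < l) (_ : x ∈ cubeOf n c l),
    ENNReal.ofReal (l ^ α) * (∫⁻ y in cubeOf n c l, (‖f y‖₊ : ℝ≥0∞))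
      / volume (cubeOf n c l)

/-- The fractional maximal function of a measure over cubes. -/
noncomputable def cubeFracMaxMeas (n : ℕ) (α : ℝ)
    (μ : Measure (EuclideanSpace ℝ (Fin n))) (x : EuclideanSpace ℝ (Fin n)) : ℝ≥0∞ :=
  ⨆ (c : Fin n → ℝ) (l : ℝ) (_ : 0 < l) (_ : x ∈ cubeOf n c l),
    ENNReal.ofReal (l ^ α) * μ (cubeOf n c l) / volume (cubeOf n c l)

lemma cubeOf_eq_preimage_ofLp (n : ℕ) (c : Fin n → ℝ) (l : ℝ) :
    cubeOf n c l = WithLp.ofLp ⁻¹' Set.univ.pi fun i => Set.Ico (c i) (c i + l) := by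
  ext y
  simp [cubeOf, Set.mem_pi]

lemma volume_cubeOf (n : ℕ) (c : Fin n → ℝ) (l : ℝ) :
    volume (cubeOf n c l) = ENNReal.ofReal l ^ n := by
  rw [cubeOf_eq_preimage_ofLp, (PiLp.volume_preserving_ofLp (Fin n)).measure_preimage
    (MeasurableSet.univ_pi fun _ => measurableSet_Ico).nullMeasurableSet, Real.volume_pi_Ico]
  simp

lemma volume_cubeOf_ne_zero (n : ℕ) (c : Fin n → ℝ) {l : ℝ} (hl : 0 < l) :
    volume (cubeOf n c l) ≠ 0 := by
  simp [volume_cubeOf, hl]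

lemma volume_cubeOf_ne_top (n : ℕ) (c : Fin n → ℝ) (l : ℝ) :
    volume (cubeOf n c l) ≠ ∞ := by
  simp [volume_cubeOf]

section CubeMaximal

variable {n : ℕ} {α : ℝ} {c : Fin n → ℝ} {l : ℝ} {x : EuclideanSpace ℝ (Fin n)}

lemma le_cubeFracMaxFn (f : EuclideanSpace ℝ (Fin n) → ℝ) (hl : 0 < l) (hx : x ∈ cubeOf n c l) :
    ENNReal.ofReal (l ^ α) * (∫⁻ y in cubeOf n c l, (‖f y‖₊ : ℝ≥0∞)) / volume (cubeOf n c l)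
      ≤ cubeFracMaxFn n α f x :=
  le_iSup_of_le c <| le_iSup_of_le l <| le_iSup_of_le hl <| le_iSup_of_le hx le_rfl

lemma le_cubeFracMaxMeas (μ : Measure (EuclideanSpace ℝ (Fin n))) (hl : 0 < l)
    (hx : x ∈ cubeOf n c l) :
    ENNReal.ofReal (l ^ α) * μ (cubeOf n c l) / volume (cubeOf n c l)
      ≤ cubeFracMaxMeas n α μ x :=
  le_iSup_of_le c <| le_iSup_of_le l <| le_iSup_of_le hl <| le_iSup_of_le hx le_rfl

end CubeMaximal

section SparseSums

variable {X ι : Type*} [MeasurableSpace X] [Countable ι] {E : ι → Set X}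

lemma lintegral_tsum_indicator_const (μ : Measure X) (hE : ∀ i, MeasurableSet (E i))
    (a : ι → ℝ≥0∞) :
    ∫⁻ x, ∑' i, (E i).indicator (fun _ => a i) x ∂μ = ∑' i, a i * μ (E i) := by
  rw [lintegral_tsum fun i => (measurable_const.indicator (hE i)).aemeasurable]
  simp_rw [lintegral_indicator_const (hE _)]

lemma tsum_setLIntegral_le_lintegral (μ : Measure X) (hE : ∀ i, MeasurableSet (E i))
    (hd : Pairwise (Function.onFun Disjoint E)) (F : X → ℝ≥0∞) :
    ∑' i, ∫⁻ x in E i, F x ∂μ ≤ ∫⁻ x, F x ∂μ :=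
  (lintegral_iUnion hE hd F).symm.le.trans (setLIntegral_le_lintegral _ _)

end SparseSums

lemma fracAverage_mul_measure_le_two_mul_setLIntegral {n : ℕ} {α : ℝ}
    (f : EuclideanSpace ℝ (Fin n) → ℝ) (μ : Measure (EuclideanSpace ℝ (Fin n)))
    {c : Fin n → ℝ} {l : ℝ} (hl : 0 < l) {E : Set (EuclideanSpace ℝ (Fin n))}
    (hE : MeasurableSet E) (hEQ : E ⊆ cubeOf n c l)
    (hhalf : volume (cubeOf n c l) ≤ 2 * volume E) :
    ENNReal.ofReal (l ^ α) * (∫⁻ y in cubeOf n c l, (‖f y‖₊ : ℝ≥0∞)) / volume (cubeOf n c l)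
        * μ E
      ≤ 2 * ∫⁻ x in E, cubeFracMaxFn n 0 f x * cubeFracMaxMeas n α μ x := by
  set Q := cubeOf n c l
  set avg := (∫⁻ y in Q, (‖f y‖₊ : ℝ≥0∞)) / volume Q
  set frac := ENNReal.ofReal (l ^ α) * μ Q / volume Q
  have hpoint : ∀ x ∈ E, avg * frac ≤ cubeFracMaxFn n 0 f x * cubeFracMaxMeas n α μ x := by
    intro x hx
    have havg := le_cubeFracMaxFn (α := 0) f hl (hEQ hx)
    rw [Real.rpow_zero, ENNReal.ofReal_one, one_mul] at havg
    exact mul_le_mul' havg (le_cubeFracMaxMeas μ hl (hEQ hx))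
  calc ENNReal.ofReal (l ^ α) * (∫⁻ y in Q, (‖f y‖₊ : ℝ≥0∞)) / volume Q * μ E
      ≤ ENNReal.ofReal (l ^ α) * (∫⁻ y in Q, (‖f y‖₊ : ℝ≥0∞)) / volume Q * μ Q := by
        gcongr
    _ = avg * frac * volume Q := by
        rw [mul_assoc avg, ENNReal.div_mul_cancel (volume_cubeOf_ne_zero n c hl)
          (volume_cubeOf_ne_top n c l)]
        simp only [avg, div_eq_mul_inv]
        ring
    _ ≤ avg * frac * (2 * volume E) := by gcongr
    _ = 2 * ∫⁻ _ in E, avg * frac := by rw [setLIntegral_const]; ring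
    _ ≤ 2 * ∫⁻ x in E, cubeFracMaxFn n 0 f x * cubeFracMaxMeas n α μ x := by
        gcongr 1; exact setLIntegral_mono' hE hpoint

theorem sparse_implies_endpoint (n : ℕ) (α : ℝ)
    (c : ℝ≥0∞) (ι : Type*) [Countable ι]
    (cc : ι → Fin n → ℝ) (l : ι → ℝ) (hl : ∀ i, 0 < l i)
    (Esets : ι → Set (EuclideanSpace ℝ (Fin n)))
    (hEmeas : ∀ i, MeasurableSet (Esets i))
    (hEsub : ∀ i, Esets i ⊆ cubeOf n (cc i) (l i))
    (hEhalf : ∀ i, volume (cubeOf n (cc i) (l i)) ≤ 2 * volume (Esets i))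
    (hdisj : Pairwise (Function.onFun Disjoint Esets))
    (f : EuclideanSpace ℝ (Fin n) → ℝ)
    (g : EuclideanSpace ℝ (Fin n) → ℝ≥0∞)
    (hg : ∀ x, g x ≤ c * ∑' i, Set.indicator (Esets i)
        (fun _ => ENNReal.ofReal (l i ^ α) *
          (∫⁻ y in cubeOf n (cc i) (l i), (‖f y‖₊ : ℝ≥0∞))
            / volume (cubeOf n (cc i) (l i))) x)
    (μ : Measure (EuclideanSpace ℝ (Fin n))) :
    ∫⁻ x, g x ∂μ ≤
      2 * c * ∫⁻ x, cubeFracMaxFn n 0 f x * cubeFracMaxMeas n α μ x := by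
  set a : ι → ℝ≥0∞ := fun i => ENNReal.ofReal (l i ^ α) *
    (∫⁻ y in cubeOf n (cc i) (l i), (‖f y‖₊ : ℝ≥0∞)) / volume (cubeOf n (cc i) (l i))
  set F := fun x => cubeFracMaxFn n 0 f x * cubeFracMaxMeas n α μ x
  have hsum : Measurable fun x => ∑' i, (Esets i).indicator (fun _ => a i) x :=
    .tsum fun i => measurable_const.indicator (hEmeas i)
  calc ∫⁻ x, g x ∂μ
      ≤ ∫⁻ x, c * ∑' i, (Esets i).indicator (fun _ => a i) x ∂μ := lintegral_mono hg
    _ = c * ∑' i, a i * μ (Esets i) := by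
        rw [lintegral_const_mul c hsum, lintegral_tsum_indicator_const μ hEmeas]
    _ ≤ c * ∑' i, 2 * ∫⁻ x in Esets i, F x := by
        gcongr c * ?_
        exact ENNReal.tsum_le_tsum fun i => fracAverage_mul_measure_le_two_mul_setLIntegral f μ
          (hl i) (hEmeas i) (hEsub i) (hEhalf i)
    _ ≤ 2 * c * ∫⁻ x, F x := by
        rw [ENNReal.tsum_mul_left, mul_left_comm, mul_assoc]
        gcongr
        exact tsum_setLIntegral_le_lintegral volume hEmeas hdisj F
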